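/- Let A ∈ ℝ^{n×n} have all eigenvalues with nonnegative real part, B ∈ ℝ^{n×m} with (A,B) controllable, Q ∈ ℝ^{n×n} positive semidefinite with (A, Q^{1/2}) observable, and let P be a symmetric positive definite solution of the algebraic Riccati equation AᵀP + PA − PBBᵀP + Q = 0. Then the pair (A, BᵀP) is observable. -/

import Mathlib

/-!
If `(A, BᵀP)` were not observable, its unobservable subspace `W = ⋂ₖ ker (BᵀP Aᵏ)` would be a
nonzero `A`-invariant subspace, so after complexifying it contains an eigenvector `A v = μ v`.
On `v` the term `PBBᵀP` of the Riccati equation vanishes because `BᵀP v = 0`, leaving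
`2 Re μ ⟪v, P v⟫ + ‖Q^{1/2} v‖² = 0`. Both summands are nonnegative as `Re μ ≥ 0` and `P ≥ 0`, so
`Q^{1/2} v = 0`; an eigenvector of `A` in the kernel of `Q^{1/2}` is unobservable for
`(A, Q^{1/2})`, a contradiction.
-/

open Matrix Polynomial
open scoped ComplexOrder

namespace Matrix

section Observability

variable {K ι κ : Type*} [Field K] [Fintype ι] [DecidableEq ι]

def unobservableSubspace (A : Matrix ι ι K) (C : Matrix κ ι K) : Submodule K (ι → K) :=
  ⨅ k : ℕ, LinearMap.ker (C * A ^ k).mulVecLin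

variable {A : Matrix ι ι K} {C : Matrix κ ι K} {v : ι → K}

theorem mem_unobservableSubspace :
    v ∈ unobservableSubspace A C ↔ ∀ k : ℕ, (C * A ^ k) *ᵥ v = 0 := by
  simp [unobservableSubspace]

theorem mulVec_mem_unobservableSubspace (hv : v ∈ unobservableSubspace A C) :
    A *ᵥ v ∈ unobservableSubspace A C := by
  rw [mem_unobservableSubspace] at hv ⊢
  intro k
  rw [mulVec_mulVec, Matrix.mul_assoc, ← pow_succ, hv]

theorem mem_unobservableSubspace_of_mulVec_eq_smul {μ : K} (hAv : A *ᵥ v = μ • v)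
    (hCv : C *ᵥ v = 0) : v ∈ unobservableSubspace A C := by
  have hpow (k : ℕ) : A ^ k *ᵥ v = μ ^ k • v := by
    induction k with
    | zero => simp
    | succ k ih => rw [pow_succ', ← mulVec_mulVec, ih, mulVec_smul, hAv, smul_smul, ← pow_succ]
  rw [mem_unobservableSubspace]
  intro k
  rw [← mulVec_mulVec, hpow, mulVec_smul, hCv, smul_zero]

-- Cayley–Hamilton: every power of `A` is a combination of the `A ^ i` with `i < card ι`.
theorem mem_unobservableSubspace_iff_forall_lt_card :
    v ∈ unobservableSubspace A C ↔ ∀ k < Fintype.card ι, (C * A ^ k) *ᵥ v = 0 := by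
  refine ⟨fun hv k _ ↦ mem_unobservableSubspace.mp hv k, fun hv ↦ ?_⟩
  rcases isEmpty_or_nonempty ι with _ | _
  · rw [Subsingleton.elim v 0]
    exact Submodule.zero_mem _
  rw [mem_unobservableSubspace]
  intro k
  have hr : (X ^ k %ₘ A.charpoly).natDegree < Fintype.card ι := by
    have hne : A.charpoly ≠ 1 := fun h ↦ by
      simpa [h] using (Fintype.card_pos (α := ι)).trans_eq A.charpoly_natDegree_eq_dim.symm
    simpa using natDegree_modByMonic_lt (X ^ k) A.charpoly_monic hne
  rw [A.pow_eq_aeval_mod_charpoly, aeval_eq_sum_range' hr, Matrix.mul_sum, sum_mulVec]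
  refine Finset.sum_eq_zero fun i hi ↦ ?_
  rw [Matrix.mul_smul, smul_mulVec, hv i (Finset.mem_range.mp hi), smul_zero]

theorem exists_mulVec_eq_smul_of_mulVec_mem [IsAlgClosed K] {W : Submodule K (ι → K)}
    (hW : W ≠ ⊥) (hAW : ∀ v ∈ W, A *ᵥ v ∈ W) :
    ∃ μ ∈ spectrum K A, ∃ v ∈ W, v ≠ 0 ∧ A *ᵥ v = μ • v := by
  have : Nontrivial W := Submodule.nontrivial_iff_ne_bot.mpr hW
  obtain ⟨μ, hμ⟩ := Module.End.exists_eigenvalue (A.mulVecLin.restrict hAW)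
  obtain ⟨⟨v, hvW⟩, hv⟩ := hμ.exists_hasEigenvector
  have hAv : A *ᵥ v = μ • v := congrArg Subtype.val hv.apply_eq_smul
  have hv0 : v ≠ 0 := fun h ↦ hv.2 (Subtype.ext h)
  refine ⟨μ, ?_, v, hvW, hv0, hAv⟩
  rw [← spectrum_toLin']
  exact Module.End.hasEigenvalue_iff_mem_spectrum.mp
    (Module.End.hasEigenvalue_of_hasEigenvector ⟨by simpa [Module.End.mem_eigenspace_iff], hv0⟩)

end Observability

def observabilityMatrix {K κ : Type*} [Field K] {n : ℕ} (A : Matrix (Fin n) (Fin n) K)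
    (C : Matrix κ (Fin n) K) : Matrix (Fin n × κ) (Fin n) K :=
  Matrix.of fun q j => (C * A ^ (q.1 : ℕ)) q.2 j

theorem rank_observabilityMatrix_eq_iff {K κ : Type*} [Field K] [Fintype κ] {n : ℕ}
    {A : Matrix (Fin n) (Fin n) K} {C : Matrix κ (Fin n) K} :
    (observabilityMatrix A C).rank = n ↔ unobservableSubspace A C = ⊥ := by
  have hker : LinearMap.ker (observabilityMatrix A C).mulVecLin = unobservableSubspace A C := by
    ext v
    rw [mem_unobservableSubspace_iff_forall_lt_card, Fintype.card_fin]
    simp [observabilityMatrix, funext_iff, mulVec, dotProduct, Fin.forall_iff]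
  have hrn := LinearMap.finrank_range_add_finrank_ker (observabilityMatrix A C).mulVecLin
  rw [Module.finrank_fin_fun, hker] at hrn
  rw [rank, ← Submodule.finrank_eq_zero]
  omega

section Complexification

variable {ι κ l : Type*}

theorem map_ofReal_transpose (M : Matrix κ ι ℝ) :
    Mᵀ.map Complex.ofReal = (M.map Complex.ofReal)ᴴ := by
  ext
  simp

variable [Fintype ι]

theorem map_ofReal_mul (M : Matrix l ι ℝ) (N : Matrix ι κ ℝ) :
    (M * N).map Complex.ofReal = M.map Complex.ofReal * N.map Complex.ofReal :=
  Matrix.map_mul (f := Complex.ofRealHom)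

theorem map_ofReal_pow [DecidableEq ι] (M : Matrix ι ι ℝ) (k : ℕ) :
    (M ^ k).map Complex.ofReal = M.map Complex.ofReal ^ k :=
  Matrix.map_pow M Complex.ofRealHom k

theorem re_map_ofReal_mulVec (M : Matrix κ ι ℝ) (v : ι → ℂ) :
    Complex.re ∘ (M.map Complex.ofReal *ᵥ v) = M *ᵥ (Complex.re ∘ v) := by
  ext
  simp [mulVec, dotProduct, Complex.re_sum]

theorem im_map_ofReal_mulVec (M : Matrix κ ι ℝ) (v : ι → ℂ) :
    Complex.im ∘ (M.map Complex.ofReal *ᵥ v) = M *ᵥ (Complex.im ∘ v) := by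
  ext
  simp [mulVec, dotProduct, Complex.im_sum]

theorem mem_unobservableSubspace_map_ofReal [DecidableEq ι] {A : Matrix ι ι ℝ}
    {C : Matrix κ ι ℝ} {v : ι → ℂ} :
    v ∈ unobservableSubspace (A.map Complex.ofReal) (C.map Complex.ofReal) ↔
      Complex.re ∘ v ∈ unobservableSubspace A C ∧ Complex.im ∘ v ∈ unobservableSubspace A C := by
  have hzero (w : κ → ℂ) : w = 0 ↔ Complex.re ∘ w = 0 ∧ Complex.im ∘ w = 0 := by
    simp only [funext_iff, Complex.ext_iff, Function.comp_apply, Pi.zero_apply, Complex.zero_re,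
      Complex.zero_im, forall_and]
  simp only [mem_unobservableSubspace, ← map_ofReal_pow, ← map_ofReal_mul, hzero,
    re_map_ofReal_mulVec, im_map_ofReal_mulVec, forall_and]

theorem unobservableSubspace_map_ofReal_eq_bot_iff [DecidableEq ι] {A : Matrix ι ι ℝ}
    {C : Matrix κ ι ℝ} :
    unobservableSubspace (A.map Complex.ofReal) (C.map Complex.ofReal) = ⊥ ↔
      unobservableSubspace A C = ⊥ := by
  simp only [Submodule.eq_bot_iff]
  constructor
  · intro h x hx
    have hre : Complex.re ∘ (Complex.ofReal ∘ x) = x := by ext; simp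
    have him : Complex.im ∘ (Complex.ofReal ∘ x) = 0 := by ext; simp
    have hx0 := h _ (mem_unobservableSubspace_map_ofReal.mpr
      ⟨hre ▸ hx, him ▸ Submodule.zero_mem _⟩)
    rw [← hre, hx0]
    rfl
  · intro h v hv
    obtain ⟨hre, him⟩ := mem_unobservableSubspace_map_ofReal.mp hv
    funext i
    exact Complex.ext (congrFun (h _ hre) i) (congrFun (h _ him) i)

theorem IsHermitian.eigenvectorUnitary_mul_diagonal_mul_star [DecidableEq ι] {𝕜 : Type*}
    [RCLike 𝕜] {Q : Matrix ι ι 𝕜} (hQ : Q.IsHermitian) (f : ℝ → ℝ) :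
    (hQ.eigenvectorUnitary : Matrix ι ι 𝕜) * diagonal (RCLike.ofReal ∘ f ∘ hQ.eigenvalues) *
      (star hQ.eigenvectorUnitary : Matrix ι ι 𝕜) = cfc f Q :=
  (hQ.cfc_eq f).symm

theorem PosSemidef.conjTranspose_cfc_sqrt_mul_self [DecidableEq ι] {𝕜 : Type*} [RCLike 𝕜]
    {Q : Matrix ι ι 𝕜} (hQ : Q.PosSemidef) : (cfc Real.sqrt Q)ᴴ * cfc Real.sqrt Q = Q := by
  have hsa : IsSelfAdjoint (cfc Real.sqrt Q) := cfc_predicate _ _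
  rw [← star_eq_conjTranspose, hsa.star_eq, ← cfc_mul Real.sqrt Real.sqrt Q]
  conv_rhs => rw [← cfc_id' ℝ Q (ha := hQ.1)]
  refine cfc_congr fun x hx ↦ Real.mul_self_sqrt ?_
  rw [hQ.1.spectrum_real_eq_range_eigenvalues] at hx
  obtain ⟨i, rfl⟩ := hx
  exact hQ.eigenvalues_nonneg i

theorem PosSemidef.map_ofReal [DecidableEq ι] {P : Matrix ι ι ℝ} (hP : P.PosSemidef) :
    (P.map Complex.ofReal).PosSemidef := by
  rw [← hP.conjTranspose_cfc_sqrt_mul_self, conjTranspose_eq_transpose_of_trivial, map_ofReal_mul,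
    map_ofReal_transpose]
  exact posSemidef_conjTranspose_mul_self _

end Complexification

section Riccati

variable {ι κ l : Type*} [Fintype ι] [Fintype κ] [Fintype l]
  {A P : Matrix ι ι ℂ} {B : Matrix ι κ ℂ} {S : Matrix l ι ℂ} {μ : ℂ} {v : ι → ℂ}

theorem star_dotProduct_riccati_mulVec (hAv : A *ᵥ v = μ • v) (hCv : (Bᴴ * P) *ᵥ v = 0) :
    star v ⬝ᵥ ((Aᴴ * P + P * A - P * B * Bᴴ * P + Sᴴ * S) *ᵥ v) =
      2 * (μ.re : ℂ) * (star v ⬝ᵥ (P *ᵥ v)) + star (S *ᵥ v) ⬝ᵥ (S *ᵥ v) := by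
  have h1 : star v ⬝ᵥ ((Aᴴ * P) *ᵥ v) = star μ * (star v ⬝ᵥ (P *ᵥ v)) := by
    rw [← mulVec_mulVec, dotProduct_mulVec, ← star_mulVec, hAv, star_smul, smul_dotProduct,
      smul_eq_mul]
  have h2 : star v ⬝ᵥ ((P * A) *ᵥ v) = μ * (star v ⬝ᵥ (P *ᵥ v)) := by
    rw [← mulVec_mulVec, hAv, mulVec_smul, dotProduct_smul, smul_eq_mul]
  have h3 : star v ⬝ᵥ ((P * B * Bᴴ * P) *ᵥ v) = 0 := by
    rw [Matrix.mul_assoc (P * B), ← mulVec_mulVec, hCv, mulVec_zero, dotProduct_zero]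
  have h4 : star v ⬝ᵥ ((Sᴴ * S) *ᵥ v) = star (S *ᵥ v) ⬝ᵥ (S *ᵥ v) := by
    rw [← mulVec_mulVec, dotProduct_mulVec, ← star_mulVec]
  have hμ : μ + star μ = 2 * (μ.re : ℂ) := by
    rw [Complex.star_def, Complex.add_conj]
    push_cast
    ring
  simp only [add_mulVec, sub_mulVec, dotProduct_add, dotProduct_sub, h1, h2, h3, h4]
  linear_combination (star v ⬝ᵥ (P *ᵥ v)) * hμ

theorem mulVec_eq_zero_of_riccati (hP : P.PosSemidef) (hμ : 0 ≤ μ.re) (hAv : A *ᵥ v = μ • v)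
    (hCv : (Bᴴ * P) *ᵥ v = 0) (hric : Aᴴ * P + P * A - P * B * Bᴴ * P + Sᴴ * S = 0) :
    S *ᵥ v = 0 := by
  have hsum := star_dotProduct_riccati_mulVec (S := S) hAv hCv
  rw [hric, zero_mulVec, dotProduct_zero] at hsum
  have hPv : 0 ≤ 2 * (μ.re : ℂ) * (star v ⬝ᵥ (P *ᵥ v)) :=
    mul_nonneg (by exact_mod_cast mul_nonneg zero_le_two hμ) (hP.dotProduct_mulVec_nonneg v)
  exact dotProduct_star_self_eq_zero.mp
    ((add_eq_zero_iff_of_nonneg hPv (dotProduct_star_self_nonneg _)).mp hsum.symm).2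

theorem unobservableSubspace_eq_bot_of_riccati [DecidableEq ι]
    (hA : ∀ μ ∈ spectrum ℂ A, 0 ≤ μ.re) (hP : P.PosSemidef) (hS : unobservableSubspace A S = ⊥)
    (hric : Aᴴ * P + P * A - P * B * Bᴴ * P + Sᴴ * S = 0) :
    unobservableSubspace A (Bᴴ * P) = ⊥ := by
  by_contra hW
  obtain ⟨μ, hμ, v, hvW, hv0, hAv⟩ :=
    exists_mulVec_eq_smul_of_mulVec_mem hW fun _ ↦ mulVec_mem_unobservableSubspace
  have hCv : (Bᴴ * P) *ᵥ v = 0 := by simpa using mem_unobservableSubspace.mp hvW 0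
  have hSv := mulVec_eq_zero_of_riccati hP (hA μ hμ) hAv hCv hric
  exact hv0 ((Submodule.eq_bot_iff _).mp hS v (mem_unobservableSubspace_of_mulVec_eq_smul hAv hSv))

end Riccati

theorem unobservableSubspace_eq_bot_of_riccati_real {ι κ l : Type*} [Fintype ι] [DecidableEq ι]
    [Fintype κ] [Fintype l] {A P : Matrix ι ι ℝ} {B : Matrix ι κ ℝ} {S : Matrix l ι ℝ}
    (hA : ∀ μ ∈ spectrum ℂ (A.map Complex.ofReal), 0 ≤ μ.re) (hP : P.PosSemidef)
    (hS : unobservableSubspace A S = ⊥) (hric : Aᵀ * P + P * A - P * B * Bᵀ * P + Sᵀ * S = 0) :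
    unobservableSubspace A (Bᵀ * P) = ⊥ := by
  rw [← unobservableSubspace_map_ofReal_eq_bot_iff] at hS ⊢
  rw [map_ofReal_mul, map_ofReal_transpose]
  refine unobservableSubspace_eq_bot_of_riccati hA hP.map_ofReal hS ?_
  simpa [Matrix.map_add _ Complex.ofReal_add, Matrix.map_sub _ Complex.ofReal_sub,
    map_ofReal_mul, map_ofReal_transpose] using congrArg (·.map Complex.ofReal) hric

end Matrix

theorem stmt_14_general (n m : ℕ) (A : Matrix (Fin n) (Fin n) ℝ) (B : Matrix (Fin n) (Fin m) ℝ)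
    (hA : ∀ μ ∈ spectrum ℂ (A.map Complex.ofReal), 0 ≤ μ.re)
    (Q : Matrix (Fin n) (Fin n) ℝ) (hQ : Q.PosSemidef)
    (hobsQ : (Matrix.of fun (q : Fin n × Fin n) (j : Fin n) =>
        (((hQ.1.eigenvectorUnitary : Matrix (Fin n) (Fin n) ℝ) *
          diagonal ((RCLike.ofReal : ℝ → ℝ) ∘ Real.sqrt ∘ hQ.1.eigenvalues) *
          (star hQ.1.eigenvectorUnitary : Matrix (Fin n) (Fin n) ℝ)) * A ^ (q.1 : ℕ)) q.2 j).rank = n)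
    (P : Matrix (Fin n) (Fin n) ℝ) (hP : P.PosDef)
    (hric : Aᵀ * P + P * A - P * B * Bᵀ * P + Q = 0) :
    (Matrix.of fun (q : Fin n × Fin m) (j : Fin n) =>
        ((Bᵀ * P) * A ^ (q.1 : ℕ)) q.2 j).rank = n := by
  rw [hQ.1.eigenvectorUnitary_mul_diagonal_mul_star] at hobsQ
  rw [← hQ.conjTranspose_cfc_sqrt_mul_self, conjTranspose_eq_transpose_of_trivial] at hric
  exact rank_observabilityMatrix_eq_iff.mpr <| unobservableSubspace_eq_bot_of_riccati_real hA
    hP.posSemidef (rank_observabilityMatrix_eq_iff.mp hobsQ) hric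

theorem stmt_14 (n m : ℕ) (A : Matrix (Fin n) (Fin n) ℝ) (B : Matrix (Fin n) (Fin m) ℝ)
    (hA : ∀ μ ∈ spectrum ℂ (A.map Complex.ofReal), 0 ≤ μ.re)
    (hctrb : (Matrix.of fun (i : Fin n) (q : Fin n × Fin m) =>
        (A ^ (q.1 : ℕ) * B) i q.2).rank = n)
    (Q : Matrix (Fin n) (Fin n) ℝ) (hQ : Q.PosSemidef)
    (hobsQ : (Matrix.of fun (q : Fin n × Fin n) (j : Fin n) =>
        (((hQ.1.eigenvectorUnitary : Matrix (Fin n) (Fin n) ℝ) *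
          diagonal ((RCLike.ofReal : ℝ → ℝ) ∘ Real.sqrt ∘ hQ.1.eigenvalues) *
          (star hQ.1.eigenvectorUnitary : Matrix (Fin n) (Fin n) ℝ)) * A ^ (q.1 : ℕ)) q.2 j).rank = n)
    (P : Matrix (Fin n) (Fin n) ℝ) (hP : P.PosDef)
    (hric : Aᵀ * P + P * A - P * B * Bᵀ * P + Q = 0) :
    (Matrix.of fun (q : Fin n × Fin m) (j : Fin n) =>
        ((Bᵀ * P) * A ^ (q.1 : ℕ)) q.2 j).rank = n :=
  stmt_14_general n m A B hA Q hQ hobsQ P hP hric
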